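/- Let A be an admissible linear chain, n a positive integer, and B the admissible chain with e(B) = 1 − e(Aᵀ), i.e. B = A*. Then TWₙ ∗ B is admissible and e(TWₙ ∗ B) = 1 − e((A ++ [n+1])ᵀ). (That is, [A, n+1]* = TWₙ ∗ A*.) -/

import Mathlib

/-- The tridiagonal matrix associated to a linear chain `A = [a₁,…,a_r]`:
diagonal entries `aᵢ`, entries `-1` immediately above/below the diagonal, `0` elsewhere. -/
def chainMatrix (A : List ℤ) : Matrix (Fin A.length) (Fin A.length) ℤ :=
  fun i j =>
    if i = j then A.get i
    else if (i : ℕ) + 1 = (j : ℕ) ∨ (j : ℕ) + 1 = (i : ℕ) then -1 else 0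

/-- The discriminant `d(A)` of a linear chain: the determinant of `chainMatrix A`
(the `0 × 0` determinant being `1` for the empty list). -/
def disc (A : List ℤ) : ℤ := (chainMatrix A).det

/-- A linear chain is admissible if it is nonempty and all of its entries are `≥ 2`. -/
def Admissible (A : List ℤ) : Prop := A ≠ [] ∧ ∀ a ∈ A, 2 ≤ a

/-- The inductance `e(A) = d(A̅)/d(A)` of a linear chain, as a rational number. -/
def inductance (A : List ℤ) : ℚ := (disc A.tail : ℚ) / (disc A : ℚ)

/-- `TW n`: the list consisting of `n` copies of the integer `2`. -/
def TW (n : ℕ) : List ℤ := List.replicate n 2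

/-- The `∗`-product of two (nonempty) integer lists:
`[a₁,…,a_r] ∗ [b₁,…,b_s] = [a₁,…,a_{r−1}, a_r + b₁ − 1, b₂,…,b_s]`. -/
def sprod (A B : List ℤ) : List ℤ :=
  A.dropLast ++ (A.getLast! + B.head! - 1) :: B.tail

/-!
Write `β = d(B)`, `β' = d(B̅)`, `p = d(A)`, `p' = d(A̲)`. Since `e(Aᵀ) = p'/p`, the hypothesis says
`β' p = β (p - p')`. Expanding along the first row gives `d(a :: C) = a d(C) - d(C̅)`, so prepending
a `2` leaves `d(C) - d(C̅)` unchanged, while raising the first entry by one adds `d(C̅)`. Since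
`TWₙ ∗ B = TWₙ₋₁ ++ [b₁ + 1, b₂, …]`, its discriminant is `nβ + β'` and that of its tail is
`(n - 1)β + β'`; on the other side `d(A ++ [n + 1]) = (n + 1)p - p'`. Clearing the denominators,
which are positive because every chain involved is admissible, the claim becomes the hypothesis.
-/

lemma disc_nil : disc [] = 1 := by
  simp [disc]

lemma disc_singleton (a : ℤ) : disc [a] = a := by
  simp [disc, chainMatrix]

lemma chainMatrix_cons_succ_succ (a : ℤ) (A : List ℤ) (i j : Fin A.length) :
    chainMatrix (a :: A) i.succ j.succ = chainMatrix A i j := by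
  simp [chainMatrix]

lemma Matrix.det_succ_column_zero_of_lower_eq_zero {R : Type*} [CommRing R] {k : ℕ}
    (N : Matrix (Fin (k + 1)) (Fin (k + 1)) R) (h : ∀ i : Fin k, N i.succ 0 = 0) :
    N.det = N 0 0 * (N.submatrix Fin.succ Fin.succ).det := by
  rw [Matrix.det_succ_column_zero, Fin.sum_univ_succ, Finset.sum_eq_zero fun i _ => by simp [h]]
  simp

lemma disc_cons_cons (a b : ℤ) (C : List ℤ) :
    disc (a :: b :: C) = a * disc (b :: C) - disc C := by
  -- Row 0 is `[a, -1, 0, …]`, and the minor of its `-1` has `-1` as the only nonzero entry of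
  -- its first column. The index type is written as `Fin (_ + 2)` so that `Fin.succ` lemmas apply.
  let M : Matrix (Fin (C.length + 2)) (Fin (C.length + 2)) ℤ := chainMatrix (a :: b :: C)
  have hrow : ∀ j : Fin C.length, M 0 j.succ.succ = 0 := fun j => by
    simp [M, chainMatrix, Fin.ext_iff]
  have hminor : (M.submatrix Fin.succ (Fin.succAbove 1)).det = -disc C := by
    rw [Matrix.det_succ_column_zero_of_lower_eq_zero]
    · have h00 : M.submatrix Fin.succ (Fin.succAbove 1) 0 0 = -1 := by
        simp [M, chainMatrix, Fin.succAbove]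
      have hsub : (M.submatrix Fin.succ (Fin.succAbove 1)).submatrix Fin.succ Fin.succ
          = chainMatrix C := by
        ext i j
        simp [M, chainMatrix, Fin.succAbove]
      rw [h00, hsub, disc]; ring
    · intro i; simp [M, chainMatrix, Fin.ext_iff, Fin.succAbove]
  show M.det = _
  rw [Matrix.det_succ_row_zero, Fin.sum_univ_succ, Fin.sum_univ_succ,
    Finset.sum_eq_zero fun j _ => by rw [hrow]; ring]
  have hsub : M.submatrix Fin.succ Fin.succ = chainMatrix (b :: C) := by
    ext i j
    exact chainMatrix_cons_succ_succ a (b :: C) i j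
  have h00 : M 0 0 = a := by simp [M, chainMatrix]
  have h01 : M 0 1 = -1 := by simp [M, chainMatrix]
  rw [Fin.succAbove_zero, hsub, Fin.succ_zero_eq_one, hminor, h00, h01, disc, disc,
    Fin.val_zero, Fin.val_one]
  ring

lemma disc_cons (a : ℤ) {A : List ℤ} (hA : A ≠ []) :
    disc (a :: A) = a * disc A - disc A.tail := by
  obtain ⟨b, C, rfl⟩ := List.exists_cons_of_ne_nil hA
  exact disc_cons_cons a b C

lemma disc_cons_add (a c : ℤ) (A : List ℤ) :
    disc ((a + c) :: A) = disc (a :: A) + c * disc A := by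
  rcases A with _ | ⟨b, C⟩
  · simp [disc_singleton, disc_nil]
  · rw [disc_cons_cons, disc_cons_cons]; ring

lemma disc_reverse (A : List ℤ) : disc A.reverse = disc A := by
  let e : Fin A.reverse.length ≃ Fin A.length := (finCongr A.length_reverse).trans Fin.revPerm
  have he : ∀ i, (e i : ℕ) = A.length - 1 - i := fun i => by
    simp only [e, Equiv.trans_apply, finCongr_apply, Fin.revPerm_apply, Fin.rev, Fin.val_cast]
    omega
  have hmat : chainMatrix A.reverse = (chainMatrix A).submatrix e e := by
    ext i j
    have hi := i.isLt
    have hj := j.isLt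
    simp only [List.length_reverse] at hi hj
    simp only [chainMatrix, Matrix.submatrix_apply, Fin.ext_iff, he, List.get_eq_getElem,
      List.getElem_reverse]
    split_ifs <;> first | rfl | omega
  rw [disc, hmat, Matrix.det_submatrix_equiv_self, disc]

lemma disc_append_singleton {A : List ℤ} (hA : A ≠ []) (c : ℤ) :
    disc (A ++ [c]) = c * disc A - disc A.dropLast := by
  rw [← disc_reverse, List.reverse_append, List.reverse_singleton, List.singleton_append,
    disc_cons c (List.reverse_ne_nil_iff.mpr hA), List.tail_reverse, disc_reverse, disc_reverse]

lemma inductance_reverse (A : List ℤ) : inductance A.reverse = disc A.dropLast / disc A := by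
  rw [inductance, List.tail_reverse, disc_reverse, disc_reverse]

lemma inductance_reverse_append_singleton (A : List ℤ) (c : ℤ) :
    inductance (A ++ [c]).reverse = disc A / disc (A ++ [c]) := by
  rw [inductance, disc_reverse, List.reverse_append, List.reverse_singleton,
    List.singleton_append, List.tail_cons, disc_reverse]

lemma Admissible.disc_tail_pos_and_lt {A : List ℤ} (hA : Admissible A) :
    0 < disc A.tail ∧ disc A.tail < disc A := by
  obtain ⟨hne, h2⟩ := hA
  induction A with
  | nil => exact absurd rfl hne
  | cons a A ih =>
    have ha : 2 ≤ a := h2 a List.mem_cons_self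
    rcases eq_or_ne A [] with rfl | hA
    · simp only [List.tail_cons, disc_nil, disc_singleton]
      omega
    obtain ⟨hpos, hlt⟩ := ih hA fun x hx => h2 x (List.mem_cons_of_mem a hx)
    rw [List.tail_cons, disc_cons a hA]
    constructor <;> nlinarith

lemma Admissible.disc_pos {A : List ℤ} (hA : Admissible A) : 0 < disc A :=
  hA.disc_tail_pos_and_lt.1.trans hA.disc_tail_pos_and_lt.2

lemma admissible_TW {n : ℕ} (hn : 0 < n) : Admissible (TW n) :=
  ⟨by simp [TW]; omega, fun _ h => (List.eq_of_mem_replicate h).ge⟩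

lemma Admissible.append {A B : List ℤ} (hA : Admissible A) (hB : Admissible B) :
    Admissible (A ++ B) :=
  ⟨by simp [hA.1], fun x hx => (List.mem_append.mp hx).elim (hA.2 x) (hB.2 x)⟩

lemma Admissible.sprod {A B : List ℤ} (hA : Admissible A) (hB : Admissible B) :
    Admissible (sprod A B) := by
  have hlast : 2 ≤ A.getLast! := by
    rw [List.getLast!_eq_getLast?_getD, List.getLast?_eq_some_getLast hA.1]
    exact hA.2 _ (List.getLast_mem hA.1)
  have hhead : 2 ≤ B.head! := hB.2 _ (List.head!_mem_self hB.1)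
  refine ⟨by simp [_root_.sprod], fun x hx => ?_⟩
  rcases List.mem_append.mp hx with hx | hx | ⟨_, hx⟩
  · exact hA.2 x (List.mem_of_mem_dropLast hx)
  · omega
  · exact hB.2 x (List.mem_of_mem_tail hx)

lemma sprod_TW_succ_cons (m : ℕ) (b : ℤ) (B : List ℤ) :
    sprod (TW (m + 1)) (b :: B) = TW m ++ (b + 1) :: B := by
  have hTW : TW (m + 1) = TW m ++ [2] := List.replicate_succ' ..
  rw [_root_.sprod, hTW, List.dropLast_concat, List.head!_cons, List.tail_cons,
    List.getLast!_eq_getLast?_getD, List.getLast?_concat]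
  simp only [Option.getD_some]
  ring_nf

lemma disc_TW_append (k : ℕ) {C : List ℤ} (hC : C ≠ []) :
    disc (TW k ++ C) = disc C + k * (disc C - disc C.tail) ∧
    disc (TW k ++ C).tail = disc C.tail + k * (disc C - disc C.tail) := by
  induction k with
  | zero => simp [TW]
  | succ k ih =>
    have hTW : TW (k + 1) ++ C = 2 :: (TW k ++ C) := rfl
    rw [hTW, List.tail_cons, disc_cons 2 (by simp [hC]), ih.1, ih.2]
    push_cast
    constructor <;> ring

/-- Lemma 2.3 (i): for an admissible linear chain `A` and a positive integer `n`,
`[A, n+1]* = TWₙ ∗ A*`; i.e. if `B = A*` then `TWₙ ∗ B` is admissible and is the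
adjoint of `A ++ [n+1]`. -/
theorem adjoint_append (A B : List ℤ) (hA : Admissible A) (hB : Admissible B)
    (hAB : inductance B = 1 - inductance A.reverse) (n : ℕ) (hn : 0 < n) :
    Admissible (sprod (TW n) B) ∧
    inductance (sprod (TW n) B) = 1 - inductance ((A ++ [(n : ℤ) + 1]).reverse) := by
  obtain ⟨m, rfl⟩ : ∃ m, n = m + 1 := ⟨n - 1, by omega⟩
  obtain ⟨b, B', rfl⟩ := List.exists_cons_of_ne_nil hB.1
  have hD : Admissible (sprod (TW (m + 1)) (b :: B')) := (admissible_TW hn).sprod hB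
  refine ⟨hD, ?_⟩
  set c : ℤ := ((m + 1 : ℕ) : ℤ) + 1
  have hAc : Admissible (A ++ [c]) := hA.append ⟨List.cons_ne_nil _ _, by simp [c]; omega⟩
  have hDpos := hD.disc_pos
  have hAcpos := hAc.disc_pos
  have hβ := hB.disc_pos
  have hp := hA.disc_pos
  obtain ⟨hdD, hdDtail⟩ := disc_TW_append m (List.cons_ne_nil (b + 1) B')
  rw [List.tail_cons, disc_cons_add, one_mul] at hdD hdDtail
  rw [sprod_TW_succ_cons, hdD] at hDpos
  rw [disc_append_singleton hA.1] at hAcpos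
  rw [inductance_reverse, inductance, List.tail_cons] at hAB
  rw [sprod_TW_succ_cons, inductance, inductance_reverse_append_singleton,
    disc_append_singleton hA.1, hdD, hdDtail]
  field_simp at hAB ⊢
  push_cast [c]
  linear_combination hAB
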